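/- arXiv:1712.00940 — 4 statements merged into one kernel-verified Lean document; each statement's English description precedes it below -/
import Mathlib

section
/- Let (S_1, …, S_n) be an Agler-Young tuple on a complex Hilbert space H. Then there exist a complex Hilbert space K, a linear isometry ι : H → K, and bounded operators V_1, …, V_n on K such that: V_n is an isometry; V_i = V_{n-i}^* V_n for every i = 1, …, n−1 (so (V_1, …, V_n) is an Agler-Young isometry); the subspace ι(H) is invariant under each V_i^* (co-invariance); and ι^* V_i ι = S_i for every i = 1, …, n. In particular, by co-invariance, ι^* V_{i_1} V_{i_2} ⋯ V_{i_k} ι = S_{i_1} S_{i_2} ⋯ S_{i_k} for all k ≥ 1 and all indices i_1, …, i_k ∈ {1, …, n}, so (V_1, …, V_n) is an Agler-Young isometric dilation of (S_1, …, S_n). -/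
open ContinuousLinearMap

variable {H : Type u} [NormedAddCommGroup H] [InnerProductSpace ℂ H] [CompleteSpace H]

/-- The defect operator `D_T = (I - T^* T)^{1/2}` of a contraction `T`. -/
noncomputable def defectOp (T : H →L[ℂ] H) : H →L[ℂ] H :=
  CFC.sqrt (1 - adjoint T ∘L T)

/-- The defect space `𝒟_T`, the closure of the range of `D_T`. -/
noncomputable def defectSpace (T : H →L[ℂ] H) : Submodule ℂ H :=
  (LinearMap.range (defectOp T : H →ₗ[ℂ] H)).topologicalClosure

/-- The defect operator, corestricted to the defect space. -/
noncomputable def defectRestrict (T : H →L[ℂ] H) : H →L[ℂ] defectSpace T :=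
  (defectOp T).codRestrict (defectSpace T) fun x =>
    Submodule.le_topologicalClosure _ ⟨x, rfl⟩

/- ### Auxiliary constructions: operators on `ℓ²(ℕ, E)` and on `E ⊕₂ F` -/

open scoped ENNReal

set_option linter.unusedSectionVars false

noncomputable section AYAux

local notation "⟪" x ", " y "⟫" => @inner ℂ _ _ x y

namespace AY

variable {E F : Type*} [NormedAddCommGroup E] [InnerProductSpace ℂ E] [CompleteSpace E]
  [NormedAddCommGroup F] [InnerProductSpace ℂ F] [CompleteSpace F]

abbrev L (E : Type*) [NormedAddCommGroup E] [InnerProductSpace ℂ E] : Type _ :=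
  lp (fun _ : ℕ => E) 2

lemma two_pos : (0:ℝ) < (2:ℝ≥0∞).toReal := by norm_num

lemma lp_summable (g : L E) : Summable fun k => ‖g k‖ ^ (2:ℝ≥0∞).toReal :=
  (memℓp_gen_iff two_pos).1 (lp.memℓp g)

/-- single at coordinate 0, as a linear isometry. -/
def sg : E →ₗᵢ[ℂ] L E where
  toFun a := lp.single (E := fun _ : ℕ => E) 2 0 a
  map_add' a b := by
    apply lp.ext; funext k
    by_cases h : k = 0
    · subst h
      simp [lp.single_apply_self (E := fun _ : ℕ => E), lp.coeFn_add]
    · simp [lp.single_apply_ne (E := fun _ : ℕ => E) _ _ _ h, lp.coeFn_add]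
  map_smul' c a := by
    simpa using lp.single_smul (𝕜 := ℂ) (E := fun _ : ℕ => E) 2 0 a c
  norm_map' a := lp.norm_single (E := fun _ : ℕ => E) (by norm_num) 0 a

@[simp] lemma sg_apply_zero (a : E) : (sg a) 0 = a :=
  lp.single_apply_self (E := fun _ : ℕ => E) 2 0 a

@[simp] lemma sg_apply_succ (a : E) (k : ℕ) : (sg a) (k + 1) = 0 :=
  lp.single_apply_ne (E := fun _ : ℕ => E) 2 0 a (Nat.succ_ne_zero k)

/-- right shift as a plain map. -/
def shRf (f : L E) : L E :=
  ⟨fun k => Nat.casesOn k 0 (fun m => f m), by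
    apply memℓp_gen
    refine (summable_nat_add_iff 1).mp ?_
    simpa using lp_summable f⟩

@[simp] lemma shRf_apply_zero (f : L E) : (shRf f) 0 = 0 := rfl
@[simp] lemma shRf_apply_succ (f : L E) (k : ℕ) : (shRf f) (k + 1) = f k := rfl

lemma norm_shRf (f : L E) : ‖shRf f‖ = ‖f‖ := by
  have h1 : ∀ (g : L E), ‖g‖ ^ (2:ℝ≥0∞).toReal = ∑' k, ‖g k‖ ^ (2:ℝ≥0∞).toReal :=
    fun g => lp.norm_rpow_eq_tsum two_pos g
  refine Real.rpow_left_injOn two_pos.ne' (lp.norm_nonneg' _) (lp.norm_nonneg' _) ?_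
  simp only [Set.mem_setOf_eq]
  rw [h1, h1, Summable.tsum_eq_zero_add (lp_summable (shRf f))]
  simp [Real.zero_rpow two_pos.ne']

/-- the right shift, as a linear isometry. -/
def shR : L E →ₗᵢ[ℂ] L E where
  toFun := shRf
  map_add' f g := by
    apply lp.ext; funext k
    cases k <;> simp [lp.coeFn_add]
  map_smul' c f := by
    apply lp.ext; funext k
    cases k <;> simp [lp.coeFn_smul]
  norm_map' := norm_shRf

@[simp] lemma shR_apply_zero (f : L E) : (shR f) 0 = 0 := rfl
@[simp] lemma shR_apply_succ (f : L E) (k : ℕ) : (shR f) (k + 1) = f k := rfl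

/-- diagonal operator: apply `X` in each coordinate. -/
def dgf (X : E →L[ℂ] E) (f : L E) : L E :=
  ⟨fun k => X (f k), by
    apply memℓp_gen
    refine Summable.of_nonneg_of_le (fun k => Real.rpow_nonneg (norm_nonneg _) _)
      (fun k => ?_) ((lp_summable f).mul_left (‖X‖ ^ (2:ℝ≥0∞).toReal))
    calc ‖X (f k)‖ ^ (2:ℝ≥0∞).toReal ≤ (‖X‖ * ‖f k‖) ^ (2:ℝ≥0∞).toReal := by
          gcongr; exact X.le_opNorm _
      _ = ‖X‖ ^ (2:ℝ≥0∞).toReal * ‖f k‖ ^ (2:ℝ≥0∞).toReal :=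
          Real.mul_rpow (norm_nonneg _) (norm_nonneg _)⟩

@[simp] lemma dgf_apply (X : E →L[ℂ] E) (f : L E) (k : ℕ) : (dgf X f) k = X (f k) := rfl

def dg (X : E →L[ℂ] E) : L E →L[ℂ] L E :=
  LinearMap.mkContinuous
    { toFun := dgf X
      map_add' := fun f g => by apply lp.ext; funext k; simp [lp.coeFn_add]
      map_smul' := fun c f => by apply lp.ext; funext k; simp [lp.coeFn_smul] }
    ‖X‖ (fun f => by
      refine lp.norm_le_of_tsum_le two_pos (by positivity) ?_
      rw [Real.mul_rpow (norm_nonneg _) (lp.norm_nonneg' _),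
        lp.norm_rpow_eq_tsum two_pos f, ← tsum_mul_left]
      refine Summable.tsum_le_tsum (fun k => ?_)
        (Summable.of_nonneg_of_le (fun k => Real.rpow_nonneg (norm_nonneg _) _) (fun k => ?_)
          ((lp_summable f).mul_left (‖X‖ ^ (2:ℝ≥0∞).toReal)))
        ((lp_summable f).mul_left _)
      all_goals
        calc ‖(dgf X f) k‖ ^ (2:ℝ≥0∞).toReal ≤ (‖X‖ * ‖f k‖) ^ (2:ℝ≥0∞).toReal := by
              gcongr; exact X.le_opNorm _
          _ = ‖X‖ ^ (2:ℝ≥0∞).toReal * ‖f k‖ ^ (2:ℝ≥0∞).toReal :=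
              Real.mul_rpow (norm_nonneg _) (norm_nonneg _))

@[simp] lemma dg_apply (X : E →L[ℂ] E) (f : L E) (k : ℕ) : (dg X f) k = X (f k) := rfl

def sgL : E →L[ℂ] L E := sg.toContinuousLinearMap
def shRL : L E →L[ℂ] L E := shR.toContinuousLinearMap
def ev0 : L E →L[ℂ] E := adjoint sgL
def shL : L E →L[ℂ] L E := adjoint shRL

@[simp] lemma sgL_apply (a : E) : sgL a = sg a := rfl
@[simp] lemma shRL_apply (f : L E) : shRL f = shR f := rfl
@[simp] lemma adjoint_sgL : adjoint (sgL (E := E)) = ev0 := rfl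
@[simp] lemma adjoint_shRL : adjoint (shRL (E := E)) = shL := rfl
@[simp] lemma adjoint_ev0 : adjoint (ev0 (E := E)) = sgL := by rw [ev0, adjoint_adjoint]
@[simp] lemma adjoint_shL : adjoint (shL (E := E)) = shRL := by rw [shL, adjoint_adjoint]

lemma inner_sg_shR (a : E) (f : L E) : ⟪(sg a : L E), shR f⟫ = 0 := by
  rw [lp.inner_eq_tsum]
  convert tsum_zero with k
  cases k <;> simp

lemma inner_shR_sg (f : L E) (a : E) : ⟪shR f, (sg a : L E)⟫ = 0 := by
  rw [← inner_conj_symm, inner_sg_shR]; simp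

@[simp] lemma ev0_sgL : ev0 ∘L sgL (E := E) = ContinuousLinearMap.id ℂ E := by
  refine ContinuousLinearMap.ext fun a => ?_
  refine ext_inner_right ℂ fun b => ?_
  simp only [coe_comp', Function.comp_apply, ev0, coe_id', id_eq]
  rw [adjoint_inner_left]
  simpa using sg.inner_map_map a b

@[simp] lemma shL_sgL : shL ∘L sgL (E := E) = 0 := by
  refine ContinuousLinearMap.ext fun a => ?_
  refine ext_inner_right ℂ fun g => ?_
  simp only [coe_comp', Function.comp_apply, shL, zero_apply, inner_zero_left]
  rw [adjoint_inner_left]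
  simpa using inner_sg_shR a g

@[simp] lemma ev0_shRL : ev0 ∘L shRL (E := E) = 0 := by
  refine ContinuousLinearMap.ext fun f => ?_
  refine ext_inner_right ℂ fun b => ?_
  simp only [coe_comp', Function.comp_apply, ev0, zero_apply, inner_zero_left]
  rw [adjoint_inner_left]
  simpa using inner_shR_sg f b

@[simp] lemma shL_shRL : shL ∘L shRL (E := E) = ContinuousLinearMap.id ℂ (L E) := by
  refine ContinuousLinearMap.ext fun f => ?_
  refine ext_inner_right ℂ fun g => ?_
  simp only [coe_comp', Function.comp_apply, shL, coe_id', id_eq]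
  rw [adjoint_inner_left]
  simpa using shR.inner_map_map f g

@[simp] lemma dg_sgL (X : E →L[ℂ] E) : dg X ∘L sgL = sgL ∘L X := by
  ext a k
  cases k <;> simp

@[simp] lemma dg_shRL (X : E →L[ℂ] E) : dg X ∘L shRL = shRL ∘L dg X := by
  ext f k
  cases k <;> simp

@[simp] lemma adjoint_dg (X : E →L[ℂ] E) : adjoint (dg X) = dg (adjoint X) := by
  symm
  rw [eq_adjoint_iff]
  intro f g
  rw [lp.inner_eq_tsum, lp.inner_eq_tsum]
  exact tsum_congr fun k => by simp [adjoint_inner_left]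

-- associativity-normalized cancellation lemmas
section assoc
variable {G : Type*} [NormedAddCommGroup G] [InnerProductSpace ℂ G] [CompleteSpace G]

@[simp] lemma ev0_sgL' (T : G →L[ℂ] E) : ev0 ∘L (sgL ∘L T) = T := by
  rw [← comp_assoc, ev0_sgL, id_comp]
@[simp] lemma shL_sgL' (T : G →L[ℂ] E) : shL ∘L (sgL ∘L T) = 0 := by
  rw [← comp_assoc, shL_sgL, zero_comp]
@[simp] lemma ev0_shRL' (T : G →L[ℂ] L E) : ev0 ∘L (shRL ∘L T) = 0 := by
  rw [← comp_assoc, ev0_shRL, zero_comp]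
@[simp] lemma shL_shRL' (T : G →L[ℂ] L E) : shL ∘L (shRL ∘L T) = T := by
  rw [← comp_assoc, shL_shRL, id_comp]
@[simp] lemma dg_sgL' (X : E →L[ℂ] E) (T : G →L[ℂ] E) :
    dg X ∘L (sgL ∘L T) = sgL ∘L (X ∘L T) := by
  rw [← comp_assoc, dg_sgL, comp_assoc]
@[simp] lemma dg_shRL' (X : E →L[ℂ] E) (T : G →L[ℂ] L E) :
    dg X ∘L (shRL ∘L T) = shRL ∘L (dg X ∘L T) := by
  rw [← comp_assoc, dg_shRL, comp_assoc]
end assoc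

/-- block operator on the `L²` product. -/
def blockOp (A : E →L[ℂ] E) (B : E →L[ℂ] F) (C : F →L[ℂ] E) (D : F →L[ℂ] F) :
    WithLp 2 (E × F) →L[ℂ] WithLp 2 (E × F) :=
  ((WithLp.prodContinuousLinearEquiv 2 ℂ E F).symm : (E × F) →L[ℂ] WithLp 2 (E × F)) ∘L
    ((A ∘L ContinuousLinearMap.fst ℂ E F + C ∘L ContinuousLinearMap.snd ℂ E F).prod
      (B ∘L ContinuousLinearMap.fst ℂ E F + D ∘L ContinuousLinearMap.snd ℂ E F)) ∘L
    ((WithLp.prodContinuousLinearEquiv 2 ℂ E F) : WithLp 2 (E × F) →L[ℂ] E × F)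

lemma blockOp_fst (A : E →L[ℂ] E) (B : E →L[ℂ] F) (C : F →L[ℂ] E) (D : F →L[ℂ] F)
    (x : WithLp 2 (E × F)) : (blockOp A B C D x).fst = A x.fst + C x.snd := rfl

lemma blockOp_snd (A : E →L[ℂ] E) (B : E →L[ℂ] F) (C : F →L[ℂ] E) (D : F →L[ℂ] F)
    (x : WithLp 2 (E × F)) : (blockOp A B C D x).snd = B x.fst + D x.snd := rfl

lemma withlp_ext {x y : WithLp 2 (E × F)} (h1 : x.fst = y.fst) (h2 : x.snd = y.snd) : x = y :=
  WithLp.ofLp_injective 2 (Prod.ext h1 h2)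

lemma adjoint_blockOp (A : E →L[ℂ] E) (B : E →L[ℂ] F) (C : F →L[ℂ] E) (D : F →L[ℂ] F) :
    adjoint (blockOp A B C D) = blockOp (adjoint A) (adjoint C) (adjoint B) (adjoint D) := by
  symm
  rw [eq_adjoint_iff]
  intro x y
  rw [WithLp.prod_inner_apply, WithLp.prod_inner_apply]
  simp only [WithLp.ofLp_fst, WithLp.ofLp_snd]
  rw [blockOp_fst, blockOp_snd,
    blockOp_fst, blockOp_snd]
  simp only [inner_add_left, inner_add_right, adjoint_inner_left]
  ring

lemma blockOp_comp (A A' : E →L[ℂ] E) (B B' : E →L[ℂ] F) (C C' : F →L[ℂ] E) (D D' : F →L[ℂ] F) :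
    blockOp A B C D ∘L blockOp A' B' C' D' =
      blockOp (A ∘L A' + C ∘L B') (B ∘L A' + D ∘L B') (A ∘L C' + C ∘L D') (B ∘L C' + D ∘L D') := by
  refine ContinuousLinearMap.ext fun x => ?_
  refine withlp_ext ?_ ?_ <;>
    simp only [coe_comp', Function.comp_apply, blockOp_fst, blockOp_snd, add_apply,
      map_add] <;> abel

/-- the isometric embedding of the first factor. -/
def emb : E →ₗᵢ[ℂ] WithLp 2 (E × F) where
  toLinearMap := (WithLp.linearEquiv 2 ℂ (E × F)).symm.toLinearMap ∘ₗ LinearMap.inl ℂ E F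
  norm_map' a := by
    have h := WithLp.prod_norm_sq_eq_of_L2 ((WithLp.linearEquiv 2 ℂ (E × F)).symm (a, 0))
    simp only [WithLp.linearEquiv_symm_apply, WithLp.toLp_fst, WithLp.toLp_snd,
      norm_zero] at h
    rw [← Real.sqrt_sq (norm_nonneg _), ← Real.sqrt_sq (norm_nonneg a)]
    congr 1
    simpa using h

@[simp] lemma emb_fst (a : E) : (emb (F := F) a).fst = a := rfl
@[simp] lemma emb_snd (a : E) : (emb (F := F) a).snd = 0 := rfl

lemma adjoint_zero' {E' F' : Type*} [NormedAddCommGroup E'] [InnerProductSpace ℂ E']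
    [CompleteSpace E'] [NormedAddCommGroup F'] [InnerProductSpace ℂ F'] [CompleteSpace F'] :
    adjoint (0 : E' →L[ℂ] F') = 0 :=
  map_zero (adjoint : (E' →L[ℂ] F') ≃ₗᵢ⋆[ℂ] (F' →L[ℂ] E'))

end AY

end AYAux

set_option maxHeartbeats 1000000
set_option synthInstance.maxHeartbeats 400000

/-- **Dilation theorem, existence.** Every Agler-Young tuple `(S_1, …, S_n)`
(`S_n` a contraction, and for each `1 ≤ i ≤ n-1` the fundamental equation
`S_i - S_{n-i}^* S_n = D_{S_n} X_i D_{S_n}` is solvable with `X_i` a bounded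
operator on the defect space `𝒟_{S_n}`) has an Agler-Young isometric dilation:
there are a Hilbert space `K`, an isometric embedding `ι : H → K` and operators
`V_1, …, V_n` on `K` with `V_n` an isometry, `V_i = V_{n-i}^* V_n`, `ι(H)`
invariant under every `V_i^*`, and `ι^* V_i ι = S_i` for `i = 1, …, n`. -/
theorem aglerYoung_tuple_dilation
    (n : ℕ) (S : ℕ → H →L[ℂ] H)
    (hcontr : ‖S n‖ ≤ 1)
    (hfund : ∀ i, 1 ≤ i → i < n →
      ∃ X : defectSpace (S n) →L[ℂ] defectSpace (S n),
        S i - adjoint (S (n - i)) ∘L S n =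
          defectOp (S n) ∘L (defectSpace (S n)).subtypeL ∘L X ∘L defectRestrict (S n)) :
    ∃ (K : Type u) (_ : NormedAddCommGroup K) (_ : InnerProductSpace ℂ K)
      (_ : CompleteSpace K) (ι : H →ₗᵢ[ℂ] K) (V : ℕ → K →L[ℂ] K),
      (∀ x, ‖V n x‖ = ‖x‖) ∧
      (∀ i, 1 ≤ i → i < n → V i = adjoint (V (n - i)) ∘L V n) ∧
      (∀ i, 1 ≤ i → i ≤ n → ∀ x : H, adjoint (V i) (ι x) ∈ Set.range ι) ∧
      (∀ i, 1 ≤ i → i ≤ n →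
        adjoint ι.toContinuousLinearMap ∘L V i ∘L ι.toContinuousLinearMap = S i) := by
  classical
  -- defect operator facts
  have hpos : (0 : H →L[ℂ] H) ≤ 1 - adjoint (S n) ∘L S n := by
    have h1 : (0 : H →L[ℂ] H) ≤ star (S n) * S n := star_mul_self_nonneg (S n)
    have h2 : ‖star (S n) * S n‖ ≤ 1 := by
      rw [CStarRing.norm_star_mul_self]
      exact mul_le_one₀ hcontr (norm_nonneg _) hcontr
    have h3 := (CStarAlgebra.mem_Icc_iff_norm_le_one.mpr ⟨h1, h2⟩).2
    rw [star_eq_adjoint, mul_def] at h3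
    exact sub_nonneg.mpr h3
  have hDsq : defectOp (S n) ∘L defectOp (S n) = 1 - adjoint (S n) ∘L S n := by
    have h := CFC.sqrt_mul_sqrt_self _ hpos
    rw [mul_def] at h
    exact h
  have hDsa : adjoint (defectOp (S n)) = defectOp (S n) :=
    isSelfAdjoint_iff'.mp (IsSelfAdjoint.of_nonneg (CFC.sqrt_nonneg _))
  have hDnorm : ∀ h : H, ‖defectOp (S n) h‖ ^ 2 = ‖h‖ ^ 2 - ‖S n h‖ ^ 2 := by
    intro h
    have h1 : (inner ℂ (defectOp (S n) h) (defectOp (S n) h) : ℂ)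
        = inner ℂ h h - inner ℂ (S n h) (S n h) := by
      calc (inner ℂ (defectOp (S n) h) (defectOp (S n) h) : ℂ)
          = inner ℂ h (adjoint (defectOp (S n)) (defectOp (S n) h)) := by
            rw [adjoint_inner_right]
        _ = inner ℂ h ((defectOp (S n) ∘L defectOp (S n)) h) := by rw [hDsa]; rfl
        _ = inner ℂ h (h - adjoint (S n) (S n h)) := by rw [hDsq]; rfl
        _ = (inner ℂ h h : ℂ) - inner ℂ h (adjoint (S n) (S n h)) := inner_sub_right _ _ _
        _ = (inner ℂ h h : ℂ) - inner ℂ (S n h) (S n h) := by rw [adjoint_inner_right]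
    have h2 : RCLike.re (inner ℂ (defectOp (S n) h) (defectOp (S n) h) : ℂ)
        = RCLike.re ((inner ℂ h h : ℂ) - inner ℂ (S n h) (S n h)) := by rw [h1]
    rw [map_sub, inner_self_eq_norm_sq, inner_self_eq_norm_sq, inner_self_eq_norm_sq] at h2
    exact h2
  -- the fundamental equations, as operator identities on `H`
  have hYex : ∀ i, ∃ Yi : H →L[ℂ] H, 1 ≤ i → i < n →
      S i = adjoint (S (n - i)) ∘L S n + defectOp (S n) ∘L Yi ∘L defectOp (S n) := by
    intro i
    by_cases hi : 1 ≤ i ∧ i < n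
    · obtain ⟨X, hX⟩ := hfund i hi.1 hi.2
      haveI : CompleteSpace (defectSpace (S n)) :=
        (Submodule.isClosed_topologicalClosure _).completeSpace_coe
      refine ⟨(defectSpace (S n)).subtypeL ∘L X ∘L
        (Submodule.orthogonalProjectionOnto (defectSpace (S n))), fun _ _ => ?_⟩
      refine ContinuousLinearMap.ext fun x => ?_
      have hx := congrArg (fun (T : H →L[ℂ] H) => T x) hX
      simp only [sub_apply, coe_comp', Function.comp_apply] at hx
      have hmem : defectOp (S n) x ∈ defectSpace (S n) :=
        Submodule.le_topologicalClosure _ (LinearMap.mem_range_self _ x)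
      have hproj : (Submodule.orthogonalProjectionOnto (defectSpace (S n))) (defectOp (S n) x)
          = defectRestrict (S n) x := by
        apply Subtype.ext
        exact Submodule.starProjection_eq_self_iff.mpr hmem
      simp only [add_apply, coe_comp', Function.comp_apply, hproj]
      exact sub_eq_iff_eq_add'.mp hx
    · exact ⟨0, fun ha hb => absurd ⟨ha, hb⟩ hi⟩
  choose Y hY using hYex
  refine ⟨WithLp 2 (H × AY.L H), inferInstance, inferInstance, inferInstance, AY.emb,
    fun j => AY.blockOp (S j)
      (if j = n then AY.sgL ∘L defectOp (S n)
        else AY.sgL ∘L (adjoint (Y (n - j)) ∘L defectOp (S n)))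
      0
      (if j = n then AY.shRL
        else AY.dg (Y j) + AY.shRL ∘L AY.dg (adjoint (Y (n - j)))),
    ?_, ?_, ?_, ?_⟩
  · -- V n is an isometry
    intro x
    simp only [eq_self_iff_true, if_true]
    have key : ‖AY.blockOp (S n) (AY.sgL ∘L defectOp (S n)) 0 AY.shRL x‖ ^ 2 = ‖x‖ ^ 2 := by
      rw [WithLp.prod_norm_sq_eq_of_L2, WithLp.prod_norm_sq_eq_of_L2,
        AY.blockOp_fst, AY.blockOp_snd]
      simp only [zero_apply, add_zero, zero_add, coe_comp', Function.comp_apply,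
        AY.sgL_apply, AY.shRL_apply]
      have h2 : ‖(AY.sg (defectOp (S n) x.fst) : AY.L H) + AY.shR x.snd‖ ^ 2
          = ‖defectOp (S n) x.fst‖ ^ 2 + ‖x.snd‖ ^ 2 := by
        rw [norm_add_sq (𝕜 := ℂ), AY.inner_sg_shR]
        simp [LinearIsometry.norm_map]
      rw [h2, hDnorm]
      ring
    rw [← Real.sqrt_sq (norm_nonneg _), ← Real.sqrt_sq (norm_nonneg x), key]
  · -- the Agler-Young identities
    intro i h1 h2
    have hi : ¬ (i = n) := by omega
    have hni : ¬ (n - i = n) := by omega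
    have hii : n - (n - i) = i := by omega
    simp only [if_neg hi, if_neg hni, eq_self_iff_true, if_true, hii]
    rw [AY.adjoint_blockOp, AY.blockOp_comp, hY i h1 h2]
    simp only [adjoint_comp, adjoint_adjoint, AY.adjoint_sgL, AY.adjoint_shRL, AY.adjoint_dg,
      AY.adjoint_zero', map_add, hDsa, comp_assoc, zero_comp, comp_zero, zero_add, add_zero,
      add_comp, comp_add, AY.ev0_sgL', AY.shL_sgL', AY.ev0_shRL', AY.shL_shRL',
      AY.dg_sgL', AY.dg_shRL', AY.ev0_sgL, AY.shL_sgL, AY.ev0_shRL, AY.shL_shRL,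
      AY.dg_sgL, AY.dg_shRL, comp_id, id_comp]
    rw [add_comm (AY.shRL ∘L AY.dg (adjoint (Y (n - i))))]
  · -- co-invariance
    intro i h1 h2 x
    refine ⟨adjoint (S i) x, ?_⟩
    rw [AY.adjoint_blockOp]
    refine AY.withlp_ext ?_ ?_ <;>
      simp [AY.blockOp_fst, AY.blockOp_snd, AY.adjoint_zero', map_zero]
  · -- compression
    intro i h1 h2
    refine ContinuousLinearMap.ext fun x => ?_
    refine ext_inner_right ℂ fun y => ?_
    simp only [coe_comp', Function.comp_apply, LinearIsometry.coe_toContinuousLinearMap]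
    rw [adjoint_inner_left, WithLp.prod_inner_apply]
    simp [AY.blockOp_fst, AY.blockOp_snd]
end

section
/- Let H be a closed subspace of a complex Hilbert space K, let (S_1, …, S_n) be a tuple of bounded operators on H, and let V be an isometry on K that is the minimal isometric dilation of S_n: H is invariant under V^*, P_H V|_H = S_n, and K is the closed linear span of {V^m h : h ∈ H, m ≥ 0}. Suppose (W_1, …, W_{n-1}, V) and (W'_1, …, W'_{n-1}, V) are two tuples of bounded operators on K, each an Agler-Young isometry (i.e. W_i = W_{n-i}^* V and W'_i = W'^*_{n-i} V for all i = 1, …, n−1), such that H is invariant under every W_i^* and every W'^*_i, and P_H W_i|_H = S_i = P_H W'_i|_H for every i = 1, …, n−1. Then W_i = W'_i for every i = 1, …, n−1. -/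
open ContinuousLinearMap
open scoped ComplexInnerProductSpace

/-- If `ι(H)` is coinvariant under `A` and `ι^* A ι = S`, then `A^*` acts on `ι(H)`
as `ι ∘ S^*`. -/
lemma aglerYoung_adjoint_apply
    {H : Type*} [NormedAddCommGroup H] [InnerProductSpace ℂ H] [CompleteSpace H]
    {K : Type*} [NormedAddCommGroup K] [InnerProductSpace ℂ K] [CompleteSpace K]
    (ι : H →ₗᵢ[ℂ] K) (S : H →L[ℂ] H) (A : K →L[ℂ] K)
    (hcoinv : ∀ x : H, adjoint A (ι x) ∈ Set.range ι)
    (hcomp : adjoint ι.toContinuousLinearMap ∘L A ∘L ι.toContinuousLinearMap = S)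
    (h : H) : adjoint A (ι h) = ι (adjoint S h) := by
  obtain ⟨y, hy⟩ := hcoinv h
  have hyS : y = adjoint S h := by
    apply ext_inner_right ℂ
    intro z
    have h1 : ⟪y, z⟫ = ⟪ι y, ι z⟫ := (ι.inner_map_map y z).symm
    rw [h1, hy, adjoint_inner_left]
    rw [adjoint_inner_left, ← hcomp]
    simp only [coe_comp', Function.comp_apply, LinearIsometry.coe_toContinuousLinearMap]
    rw [adjoint_inner_right]
    rfl
  rw [← hy, hyS]

/-- **Dilation theorem, uniqueness.** Let `V` on `K` be the minimal isometric
dilation of the contraction `S_n` on the subspace `H ⊆ K` (realized by an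
isometric embedding `ι : H → K`): `ι(H)` is invariant under `V^*`,
`ι^* V ι = S_n`, and `K` is the closed span of `{V^m (ι h)}`. If
`(W_1, …, W_{n-1}, V)` and `(W'_1, …, W'_{n-1}, V)` are two Agler-Young
isometries on `K` leaving `ι(H)` invariant under all adjoints and compressing
on `H` to the same tuple `(S_1, …, S_{n-1})`, then `W_i = W'_i` for all `i`. -/
theorem aglerYoung_isometric_dilation_unique
    {H : Type*} [NormedAddCommGroup H] [InnerProductSpace ℂ H] [CompleteSpace H]
    {K : Type*} [NormedAddCommGroup K] [InnerProductSpace ℂ K] [CompleteSpace K]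
    (ι : H →ₗᵢ[ℂ] K) (n : ℕ) (S : ℕ → H →L[ℂ] H) (V : K →L[ℂ] K)
    (hViso : ∀ x, ‖V x‖ = ‖x‖)
    (hVcoinv : ∀ x : H, adjoint V (ι x) ∈ Set.range ι)
    (hVcomp : adjoint ι.toContinuousLinearMap ∘L V ∘L ι.toContinuousLinearMap = S n)
    (hmin : (Submodule.span ℂ
        {y : K | ∃ (m : ℕ) (h : H), y = (V ^ m) (ι h)}).topologicalClosure = ⊤)
    (W W' : ℕ → K →L[ℂ] K)
    (hW : ∀ i, 1 ≤ i → i < n → W i = adjoint (W (n - i)) ∘L V)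
    (hW' : ∀ i, 1 ≤ i → i < n → W' i = adjoint (W' (n - i)) ∘L V)
    (hWcoinv : ∀ i, 1 ≤ i → i < n → ∀ x : H, adjoint (W i) (ι x) ∈ Set.range ι)
    (hW'coinv : ∀ i, 1 ≤ i → i < n → ∀ x : H, adjoint (W' i) (ι x) ∈ Set.range ι)
    (hWcomp : ∀ i, 1 ≤ i → i < n →
      adjoint ι.toContinuousLinearMap ∘L W i ∘L ι.toContinuousLinearMap = S i)
    (hW'comp : ∀ i, 1 ≤ i → i < n →
      adjoint ι.toContinuousLinearMap ∘L W' i ∘L ι.toContinuousLinearMap = S i) :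
    ∀ i, 1 ≤ i → i < n → W i = W' i := by
  -- Index swap facts
  have hswap : ∀ i, 1 ≤ i → i < n → (1 ≤ n - i ∧ n - i < n ∧ n - (n - i) = i) := by
    intro i h1 h2
    refine ⟨by omega, by omega, by omega⟩
  -- adjoint on ι(H)
  have hWadj : ∀ i, 1 ≤ i → i < n → ∀ h : H,
      adjoint (W i) (ι h) = ι (adjoint (S i) h) := fun i h1 h2 =>
    aglerYoung_adjoint_apply ι (S i) (W i) (hWcoinv i h1 h2) (hWcomp i h1 h2)
  have hW'adj : ∀ i, 1 ≤ i → i < n → ∀ h : H,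
      adjoint (W' i) (ι h) = ι (adjoint (S i) h) := fun i h1 h2 =>
    aglerYoung_adjoint_apply ι (S i) (W' i) (hW'coinv i h1 h2) (hW'comp i h1 h2)
  -- (W j)^* ∘ V = W (n-j)
  have hWrel : ∀ j, 1 ≤ j → j < n → adjoint (W j) ∘L V = W (n - j) := by
    intro j h1 h2
    obtain ⟨a1, a2, a3⟩ := hswap j h1 h2
    rw [hW (n - j) a1 a2, a3]
  have hW'rel : ∀ j, 1 ≤ j → j < n → adjoint (W' j) ∘L V = W' (n - j) := by
    intro j h1 h2
    obtain ⟨a1, a2, a3⟩ := hswap j h1 h2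
    rw [hW' (n - j) a1 a2, a3]
  -- adjoint V ∘ W j = adjoint (W (n-j))
  have hWrel2 : ∀ j, 1 ≤ j → j < n → adjoint V ∘L W j = adjoint (W (n - j)) := by
    intro j h1 h2
    rw [← hWrel j h1 h2, adjoint_comp, adjoint_adjoint]
  have hW'rel2 : ∀ j, 1 ≤ j → j < n → adjoint V ∘L W' j = adjoint (W' (n - j)) := by
    intro j h1 h2
    rw [← hW'rel j h1 h2, adjoint_comp, adjoint_adjoint]
  -- Key induction on m + k
  have key : ∀ N : ℕ, ∀ j, 1 ≤ j → j < n → ∀ m k : ℕ, m + k = N → ∀ (a b : H),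
      (⟪W j ((V ^ m) (ι a)), (V ^ k) (ι b)⟫ = ⟪W' j ((V ^ m) (ι a)), (V ^ k) (ι b)⟫) ∧
      (⟪adjoint (W j) ((V ^ m) (ι a)), (V ^ k) (ι b)⟫ =
        ⟪adjoint (W' j) ((V ^ m) (ι a)), (V ^ k) (ι b)⟫) := by
    intro N
    induction N using Nat.strong_induction_on with
    | _ N ih =>
      intro j hj1 hj2 m k hmk a b
      obtain ⟨a1, a2, _⟩ := hswap j hj1 hj2
      constructor
      · -- non-adjoint part
        cases k with
        | zero =>
          simp only [pow_zero, ContinuousLinearMap.one_apply]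
          rw [← adjoint_inner_right (W j), ← adjoint_inner_right (W' j),
            hWadj j hj1 hj2, hW'adj j hj1 hj2]
        | succ k' =>
          have hp : (V ^ (k' + 1)) (ι b) = V ((V ^ k') (ι b)) := by
            rw [pow_succ']; rfl
          rw [hp, ← adjoint_inner_left V, ← adjoint_inner_left V]
          have e1 : adjoint V (W j ((V ^ m) (ι a))) =
              adjoint (W (n - j)) ((V ^ m) (ι a)) := by
            rw [← hWrel2 j hj1 hj2]; rfl
          have e2 : adjoint V (W' j ((V ^ m) (ι a))) =
              adjoint (W' (n - j)) ((V ^ m) (ι a)) := by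
            rw [← hW'rel2 j hj1 hj2]; rfl
          rw [e1, e2]
          exact (ih (m + k') (by omega) (n - j) a1 a2 m k' rfl a b).2
      · -- adjoint part
        cases m with
        | zero =>
          simp only [pow_zero, ContinuousLinearMap.one_apply]
          rw [hWadj j hj1 hj2, hW'adj j hj1 hj2]
        | succ m' =>
          have hp : (V ^ (m' + 1)) (ι a) = V ((V ^ m') (ι a)) := by
            rw [pow_succ']; rfl
          have e1 : adjoint (W j) ((V ^ (m' + 1)) (ι a)) =
              W (n - j) ((V ^ m') (ι a)) := by
            rw [hp, ← hWrel j hj1 hj2]; rfl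
          have e2 : adjoint (W' j) ((V ^ (m' + 1)) (ι a)) =
              W' (n - j) ((V ^ m') (ι a)) := by
            rw [hp, ← hW'rel j hj1 hj2]; rfl
          rw [e1, e2]
          exact (ih (m' + k) (by omega) (n - j) a1 a2 m' k rfl a b).1
  -- density
  set D : Submodule ℂ K :=
    Submodule.span ℂ {y : K | ∃ (m : ℕ) (h : H), y = (V ^ m) (ι h)} with hD
  have hdense : Dense (D : Set K) :=
    Submodule.dense_iff_topologicalClosure_eq_top.mpr hmin
  intro i hi1 hi2
  apply ContinuousLinearMap.ext_on hdense
  rintro x ⟨m, a, rfl⟩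
  -- show W i (V^m ι a) = W' i (V^m ι a)
  have horth : W i ((V ^ m) (ι a)) - W' i ((V ^ m) (ι a)) ∈ Dᗮ := by
    rw [Submodule.mem_orthogonal]
    intro u hu
    rw [inner_eq_zero_symm]
    induction hu using Submodule.span_induction with
    | mem y hy =>
      obtain ⟨k, b, rfl⟩ := hy
      rw [inner_sub_left, sub_eq_zero]
      exact (key (m + k) i hi1 hi2 m k rfl a b).1
    | zero => rw [inner_zero_right]
    | add y z _ _ hy hz => rw [inner_add_right, hy, hz, add_zero]
    | smul c y _ hy => rw [inner_smul_right, hy, mul_zero]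
  have hbot : Dᗮ = ⊥ := Submodule.topologicalClosure_eq_top_iff.mp hmin
  rw [hbot, Submodule.mem_bot, sub_eq_zero] at horth
  exact horth
end

section
/- Let (S_1, …, S_n) be a tuple of bounded operators on a complex Hilbert space H that admits an Agler-Young isometric dilation: there exist a Hilbert space K containing H and an Agler-Young isometry (W_1, …, W_n) on K such that P_H W_{i_1} W_{i_2} ⋯ W_{i_k}|_H = S_{i_1} S_{i_2} ⋯ S_{i_k} for all k ≥ 1 and all indices i_1, …, i_k ∈ {1, …, n}. Then (S_1, …, S_n) admits a minimal Agler-Young isometric dilation for which H is a co-invariant subspace: there exist a Hilbert space K' containing H and an Agler-Young isometry (R_1, …, R_n) on K' such that H is invariant under every R_i^*, P_H R_i|_H = S_i for each i, and K' is the closed linear span of {R_{i_1} ⋯ R_{i_k} h : h ∈ H, k ≥ 0, 1 ≤ i_1, …, i_k ≤ n}. -/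
open ContinuousLinearMap

open scoped InnerProductSpace

/-- If a tuple `(S_1, …, S_n)` on `H` admits an Agler-Young isometric dilation
`(W_1, …, W_n)` on some Hilbert space `K ⊇ H` (realized by an isometric embedding
`ι : H → K`), i.e. `P_H W_{i_1} ⋯ W_{i_k}|_H = S_{i_1} ⋯ S_{i_k}` for all nonempty
words with letters in `{1, …, n}`, then it admits a minimal Agler-Young isometric
dilation `(R_1, …, R_n)` on a Hilbert space `K'` (with embedding `κ`) for which
`κ(H)` is co-invariant, `κ^* R_i κ = S_i`, and `K'` is the closed span of all
vectors `R_{i_1} ⋯ R_{i_k} (κ h)`. -/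
theorem aglerYoung_minimal_dilation_exists
    {H : Type u} [NormedAddCommGroup H] [InnerProductSpace ℂ H] [CompleteSpace H]
    {K : Type v} [NormedAddCommGroup K] [InnerProductSpace ℂ K] [CompleteSpace K]
    (ι : H →ₗᵢ[ℂ] K) (n : ℕ) (S : ℕ → H →L[ℂ] H) (W : ℕ → K →L[ℂ] K)
    (hWiso : ∀ x, ‖W n x‖ = ‖x‖)
    (hWrel : ∀ i, 1 ≤ i → i < n → W i = adjoint (W (n - i)) ∘L W n)
    (hdil : ∀ L : List ℕ, L ≠ [] → (∀ i ∈ L, 1 ≤ i ∧ i ≤ n) →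
      adjoint ι.toContinuousLinearMap ∘L (L.map W).prod ∘L ι.toContinuousLinearMap =
        (L.map S).prod) :
    ∃ (K' : Type v) (_ : NormedAddCommGroup K') (_ : InnerProductSpace ℂ K')
      (_ : CompleteSpace K') (κ : H →ₗᵢ[ℂ] K') (R : ℕ → K' →L[ℂ] K'),
      (∀ x, ‖R n x‖ = ‖x‖) ∧
      (∀ i, 1 ≤ i → i < n → R i = adjoint (R (n - i)) ∘L R n) ∧
      (∀ i, 1 ≤ i → i ≤ n → ∀ x : H, adjoint (R i) (κ x) ∈ Set.range κ) ∧
      (∀ i, 1 ≤ i → i ≤ n →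
        adjoint κ.toContinuousLinearMap ∘L R i ∘L κ.toContinuousLinearMap = S i) ∧
      (Submodule.span ℂ {y : K' | ∃ (L : List ℕ) (h : H),
          (∀ i ∈ L, 1 ≤ i ∧ i ≤ n) ∧ y = (L.map R).prod (κ h)}).topologicalClosure = ⊤ := by
  classical
  set ι' : H →L[ℂ] K := ι.toContinuousLinearMap with hι'
  have hι'app : ∀ x : H, ι' x = ι x := fun x => rfl
  -- the generating set and the minimal space
  set G : Set K := {y | ∃ (L : List ℕ) (h : H),
      (∀ i ∈ L, 1 ≤ i ∧ i ≤ n) ∧ y = (L.map W).prod (ι h)} with hG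
  set M : Submodule ℂ K := Submodule.span ℂ G with hM
  set N : Submodule ℂ K := M.topologicalClosure with hN
  haveI : CompleteSpace ↥N := (M.isClosed_topologicalClosure).completeSpace_coe
  have hGN : G ⊆ (N : Set K) := fun g hg =>
    M.le_topologicalClosure (Submodule.subset_span hg)
  have hιG : ∀ x : H, ι x ∈ G := by
    intro x
    exact ⟨[], x, by simp, by simp⟩
  have hιN : ∀ x : H, ι x ∈ N := fun x => hGN (hιG x)
  -- the embedding κ
  set κ : H →ₗᵢ[ℂ] ↥N :=
    { toLinearMap := ι.toLinearMap.codRestrict N hιN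
      norm_map' := fun x => by
        rw [show ‖(ι.toLinearMap.codRestrict N hιN) x‖ = ‖ι x‖ from rfl]
        exact ι.norm_map x } with hκ
  have hκcoe : ∀ x : H, ((κ x : K)) = ι x := fun x => rfl
  -- W i preserves N for i in range
  have hmaps : ∀ i, 1 ≤ i → i ≤ n → ∀ v : ↥N, W i (v : K) ∈ N := by
    intro i h1 h2 v
    have hGclosed : ∀ g ∈ G, W i g ∈ G := by
      rintro g ⟨L, h, hL, rfl⟩
      refine ⟨i :: L, h, ?_, ?_⟩
      · intro j hj
        rcases List.mem_cons.1 hj with rfl | hj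
        · exact ⟨h1, h2⟩
        · exact hL j hj
      · simp [List.prod_cons, ContinuousLinearMap.mul_apply]
    have hMle : M ≤ Submodule.comap (W i : K →ₗ[ℂ] K) N := by
      rw [hM, Submodule.span_le]
      intro g hg
      exact M.le_topologicalClosure (Submodule.subset_span (hGclosed g hg))
    have hcl : IsClosed ((Submodule.comap (W i : K →ₗ[ℂ] K) N : Submodule ℂ K) : Set K) := by
      have : ((Submodule.comap (W i : K →ₗ[ℂ] K) N : Submodule ℂ K) : Set K)
          = (W i) ⁻¹' (N : Set K) := rfl
      rw [this]
      exact (M.isClosed_topologicalClosure).preimage (W i).continuous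
    have := Submodule.topologicalClosure_minimal M hMle hcl
    exact this v.2
  -- the restricted operators
  set R : ℕ → ↥N →L[ℂ] ↥N := fun i =>
    if h : 1 ≤ i ∧ i ≤ n then
      ((W i).comp N.subtypeL).codRestrict N (fun v => hmaps i h.1 h.2 v)
    else 1 with hR
  have hRcoe : ∀ i, 1 ≤ i → i ≤ n → ∀ v : ↥N, ((R i v : K)) = W i (v : K) := by
    intro i h1 h2 v
    simp [hR, dif_pos (And.intro h1 h2)]
    rfl
  -- vanishing on G implies zero
  have hzero : ∀ a : ↥N, (∀ g ∈ G, ⟪(a : K), g⟫_ℂ = 0) → a = 0 := by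
    intro a ha
    set f : K →L[ℂ] ℂ := innerSL ℂ (a : K) with hf
    have hGker : G ⊆ ((LinearMap.ker (f : K →ₗ[ℂ] ℂ) : Submodule ℂ K) : Set K) := by
      intro g hg
      exact ha g hg
    have hMker : M ≤ LinearMap.ker (f : K →ₗ[ℂ] ℂ) := by
      rw [hM, Submodule.span_le]; exact hGker
    have hNker : N ≤ LinearMap.ker (f : K →ₗ[ℂ] ℂ) :=
      Submodule.topologicalClosure_minimal M hMker (isClosed_ker f)
    have : f (a : K) = 0 := hNker a.2
    have : ((a : K)) = 0 := inner_self_eq_zero.mp this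
    exact Subtype.ext this
  -- words in R coerce to words in W
  have hword : ∀ L : List ℕ, (∀ i ∈ L, 1 ≤ i ∧ i ≤ n) → ∀ h : H,
      (((L.map R).prod (κ h) : K)) = (L.map W).prod (ι h) := by
    intro L
    induction L with
    | nil => intro _ h; simp [hκcoe]
    | cons a L ih =>
      intro hL h
      have ha := hL a List.mem_cons_self
      have hL' : ∀ i ∈ L, 1 ≤ i ∧ i ≤ n := fun i hi => hL i (List.mem_cons_of_mem a hi)
      simp only [List.map_cons, List.prod_cons, ContinuousLinearMap.mul_apply]
      rw [hRcoe a ha.1 ha.2, ih hL' h]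
  -- words in W on ι h lie in G
  have hwordG : ∀ L : List ℕ, (∀ i ∈ L, 1 ≤ i ∧ i ≤ n) → ∀ h : H,
      (L.map W).prod (ι h) ∈ G := fun L hL h => ⟨L, h, hL, rfl⟩
  -- adjoint of ι' kills ι
  have hadjι : ∀ h : H, adjoint ι' (ι h) = h := by
    intro h
    refine ext_inner_right ℂ fun y => ?_
    rw [adjoint_inner_left]
    exact ι.inner_map_map h y
  have hιinner : ∀ (y : H) (g : K), ⟪ι y, g⟫_ℂ = ⟪y, adjoint ι' g⟫_ℂ :=
    fun y g => (adjoint_inner_right ι' y g).symm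
  have hιinner' : ∀ (g : K) (y : H), ⟪g, ι y⟫_ℂ = ⟪adjoint ι' g, y⟫_ℂ :=
    fun g y => (adjoint_inner_left ι' y g).symm
  -- dilation identity, pointwise, including the empty word
  have hd0 : ∀ L : List ℕ, (∀ i ∈ L, 1 ≤ i ∧ i ≤ n) → ∀ h : H,
      adjoint ι' ((L.map W).prod (ι h)) = (L.map S).prod h := by
    intro L hL h
    rcases eq_or_ne L [] with rfl | hne
    · simpa using hadjι h
    · have := congrArg (fun (T : H →L[ℂ] H) => T h) (hdil L hne hL)
      simpa [ContinuousLinearMap.comp_apply, hι'app] using this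
  refine ⟨↥N, inferInstance, inferInstance, inferInstance, κ, R, ?_, ?_, ?_, ?_, ?_⟩
  · -- isometry of R n
    intro x
    rcases Nat.eq_zero_or_pos n with rfl | hn
    · simp [hR]
    · have hcoe := hRcoe n hn le_rfl x
      calc ‖R n x‖ = ‖(R n x : K)‖ := rfl
        _ = ‖W n (x : K)‖ := by rw [hcoe]
        _ = ‖(x : K)‖ := hWiso _
        _ = ‖x‖ := rfl
  · -- Agler-Young relations
    intro i h1 h2
    have hi2 : i ≤ n := le_of_lt h2
    have hn1 : 1 ≤ n := lt_of_le_of_lt (Nat.zero_le _) h2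
    have hni1 : 1 ≤ n - i := Nat.le_sub_of_add_le (by omega)
    have hni2 : n - i ≤ n := Nat.sub_le _ _
    refine ContinuousLinearMap.ext fun v => ?_
    refine ext_inner_right ℂ fun w => ?_
    rw [ContinuousLinearMap.comp_apply, adjoint_inner_left]
    rw [Submodule.coe_inner, Submodule.coe_inner]
    rw [hRcoe i h1 hi2 v, hRcoe n hn1 le_rfl v, hRcoe (n - i) hni1 hni2 w]
    rw [hWrel i h1 h2, ContinuousLinearMap.comp_apply, adjoint_inner_left]
  · -- co-invariance
    intro i h1 h2 x
    refine ⟨adjoint (S i) x, ?_⟩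
    have key : κ (adjoint (S i) x) - adjoint (R i) (κ x) = 0 := by
      apply hzero
      rintro g ⟨L, h, hL, rfl⟩
      set z : ↥N := ⟨(L.map W).prod (ι h), hGN (hwordG L hL h)⟩ with hz
      have hzcoe : ((z : K)) = (L.map W).prod (ι h) := rfl
      have e1 : ⟪(κ (adjoint (S i) x) : K), (z : K)⟫_ℂ
          = ⟪x, S i ((L.map S).prod h)⟫_ℂ := by
        rw [hκcoe, hιinner, hzcoe, hd0 L hL h, adjoint_inner_left]
      have e2 : ⟪(adjoint (R i) (κ x) : K), (z : K)⟫_ℂ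
          = ⟪x, S i ((L.map S).prod h)⟫_ℂ := by
        rw [← Submodule.coe_inner, adjoint_inner_left, Submodule.coe_inner]
        rw [hκcoe, hRcoe i h1 h2 z, hzcoe]
        have hiL : ∀ j ∈ i :: L, 1 ≤ j ∧ j ≤ n := by
          intro j hj
          rcases List.mem_cons.1 hj with rfl | hj
          · exact ⟨h1, h2⟩
          · exact hL j hj
        have hdi : adjoint ι' (W i ((L.map W).prod (ι h)))
            = S i ((L.map S).prod h) := by
          have := hd0 (i :: L) hiL h
          simpa [List.prod_cons, ContinuousLinearMap.mul_apply] using this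
        rw [hιinner, hdi]
      rw [AddSubgroupClass.coe_sub, inner_sub_left, e1, e2, sub_self]
    have := sub_eq_zero.mp key
    exact this
  · -- compression
    intro i h1 h2
    ext x
    refine ext_inner_right ℂ fun y => ?_
    simp only [ContinuousLinearMap.comp_apply]
    have hκ' : κ.toContinuousLinearMap x = κ x := rfl
    rw [hκ', adjoint_inner_left]
    have : κ.toContinuousLinearMap y = κ y := rfl
    rw [this, Submodule.coe_inner, hRcoe i h1 h2 (κ x), hκcoe, hκcoe]
    have hdi : adjoint ι' (W i (ι x)) = S i x := by
      have := hd0 [i] (by intro j hj; simp at hj; subst hj; exact ⟨h1, h2⟩) x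
      simpa [List.prod_cons, ContinuousLinearMap.mul_apply] using this
    rw [hιinner', hdi]
  · -- minimality
    rw [Submodule.topologicalClosure_eq_top_iff]
    rw [Submodule.eq_bot_iff]
    intro a ha
    apply hzero
    rintro g ⟨L, h, hL, rfl⟩
    set t : ↥N := (L.map R).prod (κ h) with ht
    have htmem : t ∈ Submodule.span ℂ {y : ↥N | ∃ (L : List ℕ) (h : H),
        (∀ i ∈ L, 1 ≤ i ∧ i ≤ n) ∧ y = (L.map R).prod (κ h)} :=
      Submodule.subset_span ⟨L, h, hL, rfl⟩
    have h0 : ⟪t, a⟫_ℂ = 0 := ha t htmem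
    have h0' : ⟪a, t⟫_ℂ = 0 := by
      rw [← inner_conj_symm, h0, map_zero]
    rw [Submodule.coe_inner, hword L hL h] at h0'
    exact h0'
end

section
/- Let S_n be a pure isometry on a complex Hilbert space H and let C_1, …, C_{n-1} be bounded operators on H such that each C_i commutes with S_n or commutes with S_n^*. Define S_i = C_i S_n + C_{n-i}^* for i = 1, …, n−1. Then (S_1, …, S_n) is a pure Agler-Young isometry; in particular S_{n-i}^* S_n = S_i for every i = 1, …, n−1. -/
open ContinuousLinearMap Filter Topology

/-- If `S_n` is a pure isometry and `C_1, …, C_{n-1}` are bounded operators, each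
commuting with `S_n` or with `S_n^*`, then setting `S_i = C_i S_n + C_{n-i}^*`
produces a pure Agler-Young isometry; in particular `S_{n-i}^* S_n = S_i`
for every `i = 1, …, n-1`. -/
theorem pure_aglerYoung_isometry_of_commuting
    {H : Type*} [NormedAddCommGroup H] [InnerProductSpace ℂ H] [CompleteSpace H]
    (n : ℕ) (S C : ℕ → H →L[ℂ] H)
    (hiso : ∀ x, ‖S n x‖ = ‖x‖)
    (hpure : ∀ x, Tendsto (fun k => ‖((adjoint (S n)) ^ k) x‖) atTop (𝓝 0))
    (hC : ∀ i, 1 ≤ i → i < n →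
      C i ∘L S n = S n ∘L C i ∨ C i ∘L adjoint (S n) = adjoint (S n) ∘L C i)
    (hdef : ∀ i, 1 ≤ i → i < n → S i = C i ∘L S n + adjoint (C (n - i))) :
    ∀ i, 1 ≤ i → i < n → S i = adjoint (S (n - i)) ∘L S n := by
  -- S n is an isometry, so `(S n)⋆ ∘ S n = 1`
  have hisom : adjoint (S n) ∘L S n = 1 := by
    ext x
    apply ext_inner_right ℂ
    intro y
    have hin : ∀ a b : H, (inner ℂ (S n a) (S n b) : ℂ) = inner ℂ a b := by
      intro a b
      exact (⟨(S n : H →ₗ[ℂ] H), hiso⟩ : H →ₗᵢ[ℂ] H).inner_map_map a b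
    simp [adjoint_inner_left, hin]
  intro i h1 h2
  have h1' : 1 ≤ n - i := by omega
  have h2' : n - i < n := by omega
  have hni : n - (n - i) = i := by omega
  -- key: `(S n)⋆ ∘ (C (n-i))⋆ ∘ S n = (C (n-i))⋆`
  have key : adjoint (S n) ∘L (adjoint (C (n - i)) ∘L S n) = adjoint (C (n - i)) := by
    rcases hC (n - i) h1' h2' with h | h
    · -- C (n-i) commutes with S n; take adjoints
      have h' : adjoint (S n) ∘L adjoint (C (n - i))
          = adjoint (C (n - i)) ∘L adjoint (S n) := by
        have := congrArg adjoint h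
        rwa [adjoint_comp, adjoint_comp] at this
      rw [← comp_assoc, h', comp_assoc, hisom]; rfl
    · -- C (n-i) commutes with (S n)⋆; take adjoints
      have h' : S n ∘L adjoint (C (n - i)) = adjoint (C (n - i)) ∘L S n := by
        have := congrArg adjoint h
        rwa [adjoint_comp, adjoint_comp, adjoint_adjoint] at this
      rw [← h', ← comp_assoc, hisom]; rfl
  rw [hdef i h1 h2, hdef (n - i) h1' h2', hni]
  rw [map_add, adjoint_comp, adjoint_adjoint, add_comp, comp_assoc, key, add_comm]
end
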